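/- arXiv:2309.13757 — 4 statements merged into one kernel-verified Lean document; each statement's English description precedes it below -/
import Mathlib

section
/- If H is a cyclic group and φ, ψ : H → D are surjective group homomorphisms onto a group D, then the fibre product H ×_D H = {(h,h') : φ(h) = ψ(h')} contains a subgroup isomorphic to H. -/
/-!
Lift `φ` through `ψ`: send a generator `x` of `H` to some `y` with `ψ y = φ x`, which is possible
since the order of any element of `H` divides that of `x`. The graph `h ↦ (h, g h)` of the lift
`g : H →* H` then lies in the fibre product and is isomorphic to `H`.
-/

/-- The fibre product `H ×_D H'` of two group homomorphisms `φ : H → D`, `ψ : H' → D`,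
as a subgroup of `H × H'`. -/
def fiberProduct {H H' D : Type*} [Group H] [Group H'] [Group D]
    (φ : H →* D) (ψ : H' →* D) : Subgroup (H × H') where
  carrier := {p | φ p.1 = ψ p.2}
  one_mem' := by simp
  mul_mem' := by
    intro a b ha hb
    simp only [Set.mem_setOf_eq, Prod.fst_mul, Prod.snd_mul, map_mul] at *
    rw [ha, hb]
  inv_mem' := by
    intro a ha
    simp only [Set.mem_setOf_eq, Prod.fst_inv, Prod.snd_inv, map_inv] at *
    rw [ha]

theorem MonoidHom.exists_comp_eq_of_range_le {H D : Type*} [Group H] [Group D] [IsCyclic H]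
    (φ ψ : H →* D) (hle : φ.range ≤ ψ.range) : ∃ g : H →* H, ψ.comp g = φ := by
  obtain ⟨x, hx⟩ := IsCyclic.exists_generator (α := H)
  obtain ⟨y, hy⟩ := hle ⟨x, rfl⟩
  have hdvd : orderOf y ∣ orderOf x := orderOf_dvd_of_mem_zpowers (hx y)
  refine ⟨monoidHomOfForallMemZpowers hx hdvd, ?_⟩
  rw [MonoidHom.eq_iff_eq_on_generator hx]
  simpa using hy

theorem exists_subgroup_fiberProduct_mulEquiv_of_comp_eq {H H' D : Type*} [Group H] [Group H']
    [Group D] {φ : H →* D} {ψ : H' →* D} {g : H →* H'} (hg : ψ.comp g = φ) :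
    ∃ K : Subgroup (fiberProduct φ ψ), Nonempty (K ≃* H) := by
  let f : H →* fiberProduct φ ψ :=
    ((MonoidHom.id H).prod g).codRestrict _ fun h => (DFunLike.congr_fun hg h).symm
  have hf : Function.Injective f := fun a b hab =>
    congrArg (fun z : fiberProduct φ ψ => (z : H × H').1) hab
  exact ⟨f.range, ⟨(MonoidHom.ofInjective hf).symm⟩⟩

theorem stmt_3_general {H D : Type*} [Group H] [Group D] [IsCyclic H]
    (φ ψ : H →* D) (hψ : Function.Surjective ψ) :
    ∃ K : Subgroup (fiberProduct φ ψ), Nonempty (K ≃* H) := by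
  have hle : φ.range ≤ ψ.range := (MonoidHom.range_eq_top.mpr hψ).symm ▸ le_top
  obtain ⟨g, hg⟩ := φ.exists_comp_eq_of_range_le ψ hle
  exact exists_subgroup_fiberProduct_mulEquiv_of_comp_eq hg

/-- If `H` is a cyclic group and `φ, ψ : H → D` are surjective homomorphisms, then the fibre
product `H ×_D H` contains a subgroup isomorphic to `H`. -/
theorem stmt_3 {H D : Type*} [Group H] [Group D] [IsCyclic H]
    (φ ψ : H →* D) (hφ : Function.Surjective φ) (hψ : Function.Surjective ψ) :
    ∃ K : Subgroup (fiberProduct φ ψ), Nonempty (K ≃* H) :=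
  stmt_3_general φ ψ hψ
end

section
/- Let H be the dihedral group D₄ = ⟨a, b | a⁴ = b² = (ab)² = 1⟩, D = Z₂ × Z₂, and define surjective homomorphisms φ, ψ : H → D by φ(a) = (0,1), φ(b) = (1,0), ψ(a) = (1,0), ψ(b) = (1,1). Then the fibre product H ×_D H = {(h,h') : φ(h) = ψ(h')} contains no subgroup isomorphic to D₄. -/
open Multiplicative

namespace DihedralGroup

variable {n : ℕ}

theorem monoidHom_ext [NeZero n] {M : Type*} [Monoid M] {f g : DihedralGroup n →* M}
    (hr : f (r 1) = g (r 1)) (hsr : f (sr 0) = g (sr 0)) : f = g := by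
  have hr_pow (i : ZMod n) : (r i : DihedralGroup n) = r 1 ^ i.val := by
    rw [r_one_pow, ZMod.natCast_zmod_val]
  ext (i | i)
  · rw [hr_pow, map_pow, map_pow, hr]
  · rw [show sr i = sr 0 * r 1 ^ i.val by rw [← hr_pow, sr_mul_r, zero_add],
      map_mul, map_mul, map_pow, map_pow, hr, hsr]

def reflectionParity : DihedralGroup n → ZMod 2
  | r _ => 0
  | sr _ => 1

def rotationParity : DihedralGroup 4 → ZMod 2
  | r i => (i.val : ZMod 2)
  | sr i => (i.val : ZMod 2)

theorem reflectionParity_eq_one_of_conj_eq_inv {g y : DihedralGroup n} (hg : g * g ≠ 1)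
    (hy : y * g * y⁻¹ = g⁻¹) : reflectionParity y = 1 := by
  rcases g with i | i
  · rcases y with j | j
    · simp only [r_mul_r, inv_r, r.injEq] at hy
      exact absurd (by rw [r_mul_r, one_def]; congr 1; linear_combination hy) hg
    · rfl
  · exact absurd (sr_mul_self i) hg

theorem parity_of_mul_self_ne_one {g : DihedralGroup 4} (hg : g * g ≠ 1) :
    reflectionParity g = 0 ∧ rotationParity g = 1 := by
  revert g; decide

theorem rotationParity_of_conj_eq_inv {g y : DihedralGroup 4} (hg : reflectionParity g = 1)
    (hy : y * g * y⁻¹ = g⁻¹) : rotationParity y = reflectionParity y * rotationParity g := by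
  revert g y; decide

theorem exists_mul_self_ne_one_conj_eq_inv_of_injective {G : Type*} [Group G] (hn : 2 < n)
    {f : DihedralGroup n →* G} (hf : Function.Injective f) :
    ∃ x ∈ f.range, ∃ y ∈ f.range, x * x ≠ 1 ∧ y * x * y⁻¹ = x⁻¹ := by
  refine ⟨f (r 1), ⟨_, rfl⟩, f (sr 0), ⟨_, rfl⟩, fun h => ?_, ?_⟩
  · have := orderOf_dvd_of_pow_eq_one (x := f (r 1)) (n := 2) (by rwa [pow_two])
    rw [orderOf_injective f hf, orderOf_r_one] at this
    exact absurd (Nat.le_of_dvd two_pos this) hn.not_ge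
  · rw [← map_inv, ← map_inv, ← map_mul, ← map_mul, sr_mul_r, inv_sr, sr_mul_sr, inv_r]
    congr 2
    ring

end DihedralGroup

open DihedralGroup

def φ₀ : DihedralGroup 4 →* Multiplicative (ZMod 2 × ZMod 2) where
  toFun g := ofAdd (reflectionParity g, rotationParity g)
  map_one' := by decide
  map_mul' := by decide

def ψ₀ : DihedralGroup 4 →* Multiplicative (ZMod 2 × ZMod 2) where
  toFun g := ofAdd (reflectionParity g + rotationParity g, reflectionParity g)
  map_one' := by decide
  map_mul' := by decide

theorem mem_fiberProduct_φ₀_ψ₀ {p : DihedralGroup 4 × DihedralGroup 4} :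
    p ∈ fiberProduct φ₀ ψ₀ ↔
      reflectionParity p.1 = reflectionParity p.2 + rotationParity p.2 ∧
        rotationParity p.1 = reflectionParity p.2 := by
  change ofAdd (_, _) = ofAdd (_, _) ↔ _
  rw [ofAdd.injective.eq_iff, Prod.mk.injEq]

theorem not_conj_eq_inv_of_mem_fiberProduct {x y : DihedralGroup 4 × DihedralGroup 4}
    (hx : x ∈ fiberProduct φ₀ ψ₀) (hy : y ∈ fiberProduct φ₀ ψ₀) (hxx : x * x ≠ 1) :
    y * x * y⁻¹ ≠ x⁻¹ := by
  rw [mem_fiberProduct_φ₀_ψ₀] at hx hy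
  intro hconj
  obtain ⟨hconj₁, hconj₂⟩ := Prod.ext_iff.mp hconj
  simp only [Prod.fst_mul, Prod.snd_mul, Prod.fst_inv, Prod.snd_inv] at hconj₁ hconj₂
  by_cases hx₁ : x.1 * x.1 = 1
  · have hx₂ : x.2 * x.2 ≠ 1 := fun hx₂ => hxx (Prod.ext hx₁ hx₂)
    obtain ⟨hε₂, hδ₂⟩ := parity_of_mul_self_ne_one hx₂
    have hy₂ := reflectionParity_eq_one_of_conj_eq_inv hx₂ hconj₂
    have hy₁ := rotationParity_of_conj_eq_inv (by rw [hx.1, hε₂, hδ₂, zero_add]) hconj₁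
    rw [hx.2, hε₂, mul_zero, hy.2, hy₂] at hy₁
    exact one_ne_zero hy₁
  · obtain ⟨hε₁, hδ₁⟩ := parity_of_mul_self_ne_one hx₁
    have hy₁ := reflectionParity_eq_one_of_conj_eq_inv hx₁ hconj₁
    have hε₂ : reflectionParity x.2 = 1 := by rw [← hx.2, hδ₁]
    have hδ₂ : rotationParity x.2 = 1 := by
      rw [← hε₂, ← CharTwo.add_eq_zero, add_comm, ← hx.1, hε₁]
    have hy₂ := rotationParity_of_conj_eq_inv hε₂ hconj₂
    rw [hδ₂, mul_one] at hy₂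
    rw [hy.1, hy₂, CharTwo.add_self_eq_zero] at hy₁
    exact zero_ne_one hy₁

theorem stmt_4_general (φ ψ : DihedralGroup 4 →* Multiplicative (ZMod 2 × ZMod 2))
    (hφa : φ (DihedralGroup.r 1) = Multiplicative.ofAdd (0, 1))
    (hφb : φ (DihedralGroup.sr 0) = Multiplicative.ofAdd (1, 0))
    (hψa : ψ (DihedralGroup.r 1) = Multiplicative.ofAdd (1, 0))
    (hψb : ψ (DihedralGroup.sr 0) = Multiplicative.ofAdd (1, 1)) :
    ¬ ∃ K : Subgroup (fiberProduct φ ψ), Nonempty (K ≃* DihedralGroup 4) := by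
  obtain rfl : φ = φ₀ := monoidHom_ext (by rw [hφa]; decide) (by rw [hφb]; decide)
  obtain rfl : ψ = ψ₀ := monoidHom_ext (by rw [hψa]; decide) (by rw [hψb]; decide)
  rintro ⟨K, ⟨e⟩⟩
  let f := (fiberProduct φ₀ ψ₀).subtype.comp (K.subtype.comp e.symm.toMonoidHom)
  have hf : Function.Injective f :=
    Subtype.val_injective.comp (Subtype.val_injective.comp e.symm.injective)
  have hrange : f.range ≤ fiberProduct φ₀ ψ₀ := by
    rintro _ ⟨g, rfl⟩
    exact (K.subtype.comp e.symm.toMonoidHom g).2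
  obtain ⟨x, hx, y, hy, hxx, hconj⟩ :=
    exists_mul_self_ne_one_conj_eq_inv_of_injective (by norm_num) hf
  exact not_conj_eq_inv_of_mem_fiberProduct (hrange hx) (hrange hy) hxx hconj

/-- For `H = D₄ = ⟨a,b | a⁴ = b² = (ab)² = 1⟩` (with `a = r 1`, `b = sr 0`),
`D = Z₂ × Z₂`, and the surjective homomorphisms `φ, ψ : H → D` determined by
`φ(a) = (0,1)`, `φ(b) = (1,0)`, `ψ(a) = (1,0)`, `ψ(b) = (1,1)`, the fibre product
`H ×_D H` contains no subgroup isomorphic to `D₄`. -/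
theorem stmt_4 (φ ψ : DihedralGroup 4 →* Multiplicative (ZMod 2 × ZMod 2))
    (hφ : Function.Surjective φ) (hψ : Function.Surjective ψ)
    (hφa : φ (DihedralGroup.r 1) = Multiplicative.ofAdd (0, 1))
    (hφb : φ (DihedralGroup.sr 0) = Multiplicative.ofAdd (1, 0))
    (hψa : ψ (DihedralGroup.r 1) = Multiplicative.ofAdd (1, 0))
    (hψb : ψ (DihedralGroup.sr 0) = Multiplicative.ofAdd (1, 1)) :
    ¬ ∃ K : Subgroup (fiberProduct φ ψ), Nonempty (K ≃* DihedralGroup 4) :=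
  stmt_4_general φ ψ hφa hφb hψa hψb
end

section
/- With the groups and maps of the previous example (H = D₄, D = Z₂², φ(a)=(0,1), φ(b)=(1,0), ψ(a)=(1,0), ψ(b)=(1,1)), the fibre product H ×_D H is isomorphic to the semidirect product (Z₂ × Z₂) ⋊ Z₄ of order 16 (GAP ID (16,3)). -/
theorem mem_fiberProduct {H H' D : Type*} [Group H] [Group H'] [Group D]
    {φ : H →* D} {ψ : H' →* D} {p : H × H'} : p ∈ fiberProduct φ ψ ↔ φ p.1 = ψ p.2 :=
  Iff.rfl

theorem MonoidHom.card_graph {G D : Type*} [Group G] [Group D] (f : G →* D) :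
    Nat.card f.graph = Nat.card G := by
  rw [f.graph_eq_range_prod]
  exact (Nat.card_congr (MonoidHom.ofInjective (f := (MonoidHom.id G).prod f)
    fun _ _ h => congrArg Prod.fst h).toEquiv).symm

theorem MonoidHom.index_graph {G D : Type*} [Group G] [Group D] [Finite G] (f : G →* D) :
    f.graph.index = Nat.card D := by
  have h := f.graph.card_mul_index
  rw [Nat.card_prod, f.card_graph] at h
  exact Nat.eq_of_mul_eq_mul_left Nat.card_pos h

theorem fiberProduct_eq_comap_graph {H H' D : Type*} [Group H] [Group H'] [Group D]
    (φ : H →* D) (ψ : H' →* D) :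
    fiberProduct φ ψ = φ.graph.comap ((MonoidHom.id H).prodMap ψ) := rfl

theorem card_fiberProduct_mul_card {H H' D : Type*} [Group H] [Group H'] [Group D] [Finite H]
    (φ : H →* D) {ψ : H' →* D} (hψ : Function.Surjective ψ) :
    Nat.card (fiberProduct φ ψ) * Nat.card D = Nat.card H * Nat.card H' := by
  have hsurj : Function.Surjective ((MonoidHom.id H).prodMap ψ) :=
    Function.surjective_id.prodMap hψ
  rw [← φ.index_graph, ← Subgroup.index_comap_of_surjective _ hsurj,
    ← fiberProduct_eq_comap_graph, Subgroup.card_mul_index, Nat.card_prod]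

def zmodPowersHom {M : Type*} [Monoid M] {n : ℕ} [NeZero n] (g : M) (hg : g ^ n = 1) :
    Multiplicative (ZMod n) →* M where
  toFun k := g ^ k.toAdd.val
  map_one' := by simp
  map_mul' a b := by
    rw [toAdd_mul, ZMod.val_add, ← pow_eq_pow_mod _ hg, pow_add]

def swapAut : MulAut (Multiplicative (ZMod 2 × ZMod 2)) :=
  AddEquiv.toMultiplicative AddEquiv.prodComm

theorem swapAut_pow_four : swapAut ^ 4 = 1 := by decide

theorem swapAut_ne_one : swapAut ≠ 1 := by decide

theorem DihedralGroup.map_sr_eq_mul_pow {n : ℕ} [NeZero n] {M : Type*} [Monoid M]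
    (f : DihedralGroup n →* M) (i : ZMod n) : f (.sr i) = f (.sr 0) * f (.r 1) ^ i.val := by
  rw [← map_pow, ← map_mul, DihedralGroup.r_one_pow, ZMod.natCast_zmod_val,
    DihedralGroup.sr_mul_r, zero_add]

namespace SemidirectProduct

variable {N G : Type*} [Group N] [Group G] {φ : G →* MulAut N}

instance [Fintype N] [Fintype G] : Fintype (N ⋊[φ] G) := Fintype.ofEquiv _ equivProd.symm

instance [DecidableEq N] [DecidableEq G] : DecidableEq (N ⋊[φ] G) := equivProd.decidableEq

end SemidirectProduct

def swapAction : Multiplicative (ZMod 4) →* MulAut (Multiplicative (ZMod 2 × ZMod 2)) :=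
  zmodPowersHom swapAut swapAut_pow_four

theorem swapAction_ne_one : swapAction ≠ 1 := fun h => swapAut_ne_one <| by
  simpa [swapAction, zmodPowersHom, show (1 : ZMod 4).val = 1 from rfl] using
    DFunLike.congr_fun h (Multiplicative.ofAdd 1)

open DihedralGroup

def swapSemidirectEmbedding :
    Multiplicative (ZMod 2 × ZMod 2) ⋊[swapAction] Multiplicative (ZMod 4) →*
      DihedralGroup 4 × DihedralGroup 4 where
  toFun s := (sr 1, sr 0) ^ s.left.toAdd.1.val * (sr 3, sr 2) ^ s.left.toAdd.2.val *
    (r 1, sr 1) ^ s.right.toAdd.val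
  map_one' := by decide
  map_mul' := by decide

theorem swapSemidirectEmbedding_injective : Function.Injective swapSemidirectEmbedding :=
  (injective_iff_map_eq_one _).2 (by decide)

theorem swapSemidirectEmbedding_mem_fiberProduct
    {φ ψ : DihedralGroup 4 →* Multiplicative (ZMod 2 × ZMod 2)}
    (hφa : φ (r 1) = Multiplicative.ofAdd (0, 1)) (hφb : φ (sr 0) = Multiplicative.ofAdd (1, 0))
    (hψa : ψ (r 1) = Multiplicative.ofAdd (1, 0)) (hψb : ψ (sr 0) = Multiplicative.ofAdd (1, 1))
    (s : Multiplicative (ZMod 2 × ZMod 2) ⋊[swapAction] Multiplicative (ZMod 4)) :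
    swapSemidirectEmbedding s ∈ fiberProduct φ ψ := by
  have hx : ((sr 1, sr 0) : DihedralGroup 4 × DihedralGroup 4) ∈ fiberProduct φ ψ := by
    rw [mem_fiberProduct, map_sr_eq_mul_pow φ, hφa, hφb, hψb]; decide
  have hy : ((sr 3, sr 2) : DihedralGroup 4 × DihedralGroup 4) ∈ fiberProduct φ ψ := by
    rw [mem_fiberProduct, map_sr_eq_mul_pow φ, map_sr_eq_mul_pow ψ, hφa, hφb, hψa, hψb]
    decide
  have hz : ((r 1, sr 1) : DihedralGroup 4 × DihedralGroup 4) ∈ fiberProduct φ ψ := by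
    rw [mem_fiberProduct, map_sr_eq_mul_pow ψ, hφa, hψa, hψb]; decide
  exact mul_mem (mul_mem (pow_mem hx _) (pow_mem hy _)) (pow_mem hz _)

theorem stmt_5_general (φ ψ : DihedralGroup 4 →* Multiplicative (ZMod 2 × ZMod 2))
    (hψ : Function.Surjective ψ)
    (hφa : φ (DihedralGroup.r 1) = Multiplicative.ofAdd (0, 1))
    (hφb : φ (DihedralGroup.sr 0) = Multiplicative.ofAdd (1, 0))
    (hψa : ψ (DihedralGroup.r 1) = Multiplicative.ofAdd (1, 0))
    (hψb : ψ (DihedralGroup.sr 0) = Multiplicative.ofAdd (1, 1)) :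
    ∃ act : Multiplicative (ZMod 4) →* MulAut (Multiplicative (ZMod 2 × ZMod 2)),
      act ≠ 1 ∧
      Nonempty ((fiberProduct φ ψ) ≃*
        SemidirectProduct (Multiplicative (ZMod 2 × ZMod 2)) (Multiplicative (ZMod 4)) act) := by
  let f := swapSemidirectEmbedding.codRestrict _
    (swapSemidirectEmbedding_mem_fiberProduct hφa hφb hψa hψb)
  have hcard : Nat.card (Multiplicative (ZMod 2 × ZMod 2) ⋊[swapAction] Multiplicative (ZMod 4))
      = Nat.card (fiberProduct φ ψ) := by
    have h := card_fiberProduct_mul_card φ hψ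
    rw [SemidirectProduct.card]
    simp only [Nat.card_eq_fintype_card, Fintype.card_multiplicative, Fintype.card_prod,
      ZMod.card, DihedralGroup.card] at h ⊢
    omega
  have hf : Function.Bijective f := (Nat.bijective_iff_injective_and_card f).2
    ⟨fun s t h => swapSemidirectEmbedding_injective (congrArg Subtype.val h), hcard⟩
  exact ⟨swapAction, swapAction_ne_one, ⟨(MulEquiv.ofBijective f hf).symm⟩⟩

/-- With `H = D₄`, `D = Z₂ × Z₂`, and `φ, ψ` as in the previous example, the fibre product
`H ×_D H` is isomorphic to a (nontrivial) semidirect product `(Z₂ × Z₂) ⋊ Z₄`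
(the group of GAP ID (16,3)). -/
theorem stmt_5 (φ ψ : DihedralGroup 4 →* Multiplicative (ZMod 2 × ZMod 2))
    (hφ : Function.Surjective φ) (hψ : Function.Surjective ψ)
    (hφa : φ (DihedralGroup.r 1) = Multiplicative.ofAdd (0, 1))
    (hφb : φ (DihedralGroup.sr 0) = Multiplicative.ofAdd (1, 0))
    (hψa : ψ (DihedralGroup.r 1) = Multiplicative.ofAdd (1, 0))
    (hψb : ψ (DihedralGroup.sr 0) = Multiplicative.ofAdd (1, 1)) :
    ∃ act : Multiplicative (ZMod 4) →* MulAut (Multiplicative (ZMod 2 × ZMod 2)),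
      act ≠ 1 ∧
      Nonempty ((fiberProduct φ ψ) ≃*
        SemidirectProduct (Multiplicative (ZMod 2 × ZMod 2)) (Multiplicative (ZMod 4)) act) :=
  stmt_5_general φ ψ hψ hφa hφb hψa hψb
end

section
/- If G' is a group with a central subgroup Z ≅ Z₃ such that G'/Z ≅ S₄, then G' contains a subgroup mapped isomorphically onto S₄ by the quotient map; in particular G' contains a subgroup isomorphic to S₄. -/
/-!
A Sylow 3-subgroup `P` of `G'` has order 9, so it is abelian, and the transfer `G' → P` sends a
central `z` to `z ^ [G' : P] = z ^ 8` while killing commutators; hence `Z ∩ [G', G'] = 1`.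
Squares of `S₄` lie in `A₄ = [S₄, S₄]`, so every `g ^ 2` lies in `Z [G', G']`. The elements whose
square lies in `[G', G']` form a subgroup `K`; it meets `Z` trivially, and since `2` and `3` are
coprime every coset of `Z` contains an element of `K`.
-/

open Subgroup

namespace Equiv.Perm

variable {α : Type*} [Fintype α] [DecidableEq α]

theorem alternatingGroup_le_commutator : alternatingGroup α ≤ commutator (Perm α) := by
  rw [← closure_three_cycles_eq_alternating, closure_le]
  intro σ (hσ : σ.IsThreeCycle)
  have hconj : IsConj σ (σ ^ 2) := by
    rw [isConj_iff_cycleType_eq, sq, hσ.cycleType, hσ.isThreeCycle_sq.cycleType]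
  rw [commutator_eq_closure]
  exact subset_closure (mem_commutatorSet_of_isConj_sq (hg := hconj))

theorem sq_mem_commutator (σ : Perm α) : σ ^ 2 ∈ commutator (Perm α) :=
  alternatingGroup_le_commutator <| by rw [mem_alternatingGroup, map_pow, Int.units_sq]

end Equiv.Perm

section

variable {G H : Type*} [Group G] [Group H]

theorem map_mem_commutator (f : G →* H) {g : G} (hg : g ∈ commutator G) : f g ∈ commutator H :=
  commutator_mono le_top le_top (map_commutator_eq (G := G) f ▸ mem_map_of_mem f hg)

theorem pow_mem_commutator_of_surjective {m : ℕ} {f : G →* H} (hf : Function.Surjective f)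
    (h : ∀ g : G, g ^ m ∈ commutator G) (x : H) : x ^ m ∈ commutator H := by
  obtain ⟨g, rfl⟩ := hf x
  exact map_pow f g m ▸ map_mem_commutator f (h g)

end

open scoped IsMulCommutative in
theorem pow_index_eq_one_of_mem_center_of_mem_commutator {G : Type*} [Group G] (H : Subgroup G)
    [H.FiniteIndex] [IsMulCommutative H] {z : G} (hz : z ∈ center G)
    (hz' : z ∈ commutator G) : z ^ H.index = 1 := by
  have key : ∀ (k : ℕ) (g₀ : G), g₀⁻¹ * z ^ k * g₀ ∈ H → g₀⁻¹ * z ^ k * g₀ = z ^ k :=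
    fun k g₀ _ => by rw [mul_assoc, ← mem_center_iff.mp (pow_mem hz k) g₀, inv_mul_cancel_left]
  have hker : MonoidHom.transfer (MonoidHom.id H) z = 1 :=
    Abelianization.commutator_subset_ker _ hz'
  rw [MonoidHom.transfer_eq_pow _ z key] at hker
  exact congrArg Subtype.val hker

theorem Sylow.card_eq_pow_of_card_eq {G : Type*} [Group G] [Finite G] {p a m : ℕ}
    [hp : Fact p.Prime] (P : Sylow p G) (hG : Nat.card G = p ^ a * m) (hm : ¬ p ∣ m) :
    Nat.card P = p ^ a := by
  have hm0 : m ≠ 0 := by rintro rfl; exact hm (dvd_zero p)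
  rw [P.card_eq_multiplicity, hG, Nat.factorization_mul (pow_ne_zero a hp.out.ne_zero) hm0,
    Finsupp.add_apply, Nat.factorization_pow_self hp.out, Nat.factorization_eq_zero_of_not_dvd hm,
    add_zero]

theorem Sylow.disjoint_commutator_of_le_center {G : Type*} [Group G] [Finite G] {p : ℕ}
    [hp : Fact p.Prime] (P : Sylow p G) [IsMulCommutative P] {Z : Subgroup G}
    (hZ : Z ≤ center G) (hZp : IsPGroup p Z) : Disjoint Z (commutator G) := by
  rw [disjoint_def]
  intro z hz hz'
  obtain ⟨k, hk⟩ := IsPGroup.iff_orderOf.mp hZp ⟨z, hz⟩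
  rw [orderOf_mk] at hk
  have hdvd : orderOf z ∣ (P : Subgroup G).index := orderOf_dvd_of_pow_eq_one <|
    pow_index_eq_one_of_mem_center_of_mem_commutator (P : Subgroup G) (hZ hz) hz'
  have hcop : (orderOf z).Coprime (P : Subgroup G).index :=
    hk ▸ Nat.Coprime.pow_left k (hp.out.coprime_iff_not_dvd.mpr P.not_dvd_index)
  exact orderOf_eq_one_iff.mp (hcop.eq_one_of_dvd hdvd)

section Complement

variable (G : Type*) [Group G]

abbrev powKerAbelianization (m : ℕ) : Subgroup G :=
  ((powMonoidHom m).comp (Abelianization.of (G := G))).ker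

variable {G} {m n : ℕ} {Z : Subgroup G} [Z.Normal]

theorem injective_mk_comp_powKerAbelianization (hmn : m.Coprime n)
    (hZn : ∀ z ∈ Z, z ^ n = 1) (hZ : Disjoint Z (commutator G)) :
    Function.Injective ((QuotientGroup.mk' Z).comp (powKerAbelianization G m).subtype) := by
  rintro ⟨x, hx⟩ ⟨y, hy⟩ hxy
  have hZ' : x⁻¹ * y ∈ Z := QuotientGroup.eq.mp hxy
  have hm : Abelianization.of (x⁻¹ * y) ^ m = 1 := mul_mem (inv_mem hx) hy
  have hn : Abelianization.of (x⁻¹ * y) ^ n = 1 := by rw [← map_pow, hZn _ hZ', map_one]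
  have hab : Abelianization.of (x⁻¹ * y) = 1 := by
    simpa [hmn.gcd_eq_one] using pow_gcd_eq_one.mpr ⟨hm, hn⟩
  have hxy : x⁻¹ * y = 1 :=
    disjoint_def.mp hZ hZ' (by rwa [← Abelianization.ker_of, MonoidHom.mem_ker])
  exact Subtype.ext (inv_mul_eq_one.mp hxy)

theorem surjective_mk_comp_powKerAbelianization (hmn : m.Coprime n)
    (hZn : ∀ z ∈ Z, z ^ n = 1) (hm : ∀ q : G ⧸ Z, q ^ m ∈ commutator (G ⧸ Z)) :
    Function.Surjective ((QuotientGroup.mk' Z).comp (powKerAbelianization G m).subtype) := by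
  intro c
  obtain ⟨g, rfl⟩ := QuotientGroup.mk'_surjective Z c
  obtain ⟨d, hd, hdg⟩ :
      ∃ d ∈ commutator G, QuotientGroup.mk' Z d = QuotientGroup.mk' Z (g ^ m) := by
    have := hm (QuotientGroup.mk' Z g)
    rwa [← map_pow, _root_.commutator_def,
      ← MonoidHom.range_eq_top.mpr (QuotientGroup.mk'_surjective Z), ← map_commutator_eq] at this
  set z := d⁻¹ * g ^ m
  have hz : z ∈ Z := QuotientGroup.eq.mp hdg
  have hgz : Abelianization.of g ^ m = Abelianization.of z := by
    have hd1 : Abelianization.of d = 1 := by rwa [← MonoidHom.mem_ker, Abelianization.ker_of]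
    rw [map_mul, map_inv, hd1, inv_one, one_mul, map_pow]
  obtain ⟨k, hk⟩ := exists_pow_eq_self_of_coprime (x := Abelianization.of z)
    (hmn.coprime_dvd_right (orderOf_dvd_of_pow_eq_one (by rw [← map_pow, hZn z hz, map_one])))
  refine ⟨⟨g * (z ^ k)⁻¹, ?_⟩, ?_⟩
  · change Abelianization.of (g * (z ^ k)⁻¹) ^ m = 1
    rw [map_mul, mul_pow, hgz, map_inv, inv_pow, map_pow, ← pow_mul, mul_comm k m, pow_mul, hk,
      mul_inv_cancel]
  · change ((g * (z ^ k)⁻¹ : G) : G ⧸ Z) = g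
    rw [QuotientGroup.eq, mul_inv_rev, inv_inv, mul_assoc, inv_mul_cancel, mul_one]
    exact pow_mem hz k

end Complement

/-- If `G'` has a central subgroup `Z ≅ Z₃` with `G'/Z ≅ S₄`, then `G'` contains a subgroup
mapped isomorphically onto `G'/Z` by the quotient map; in particular `G'` contains a subgroup
isomorphic to `S₄`. -/
theorem stmt_9 {G' : Type*} [Group G'] (Z : Subgroup G') [Z.Normal]
    (hc : Z ≤ Subgroup.center G')
    (h3 : Nonempty (Z ≃* Multiplicative (ZMod 3)))
    (hq : Nonempty ((G' ⧸ Z) ≃* Equiv.Perm (Fin 4))) :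
    ∃ K : Subgroup G',
      Function.Bijective ((QuotientGroup.mk' Z).comp K.subtype) ∧
      Nonempty (K ≃* Equiv.Perm (Fin 4)) := by
  obtain ⟨e3⟩ := h3
  obtain ⟨e⟩ := hq
  have hZ : Nat.card Z = 3 := by simp [Nat.card_congr e3.toEquiv]
  have hG : Nat.card G' = 3 ^ 2 * 8 := by
    rw [← Z.card_mul_index, hZ, Subgroup.index, Nat.card_congr e.toEquiv]
    simp [Fintype.card_perm, Nat.factorial]
  have : Finite G' := Nat.finite_of_card_ne_zero (by rw [hG]; norm_num)
  have : Fact (Nat.Prime 3) := ⟨Nat.prime_three⟩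
  let P : Sylow 3 G' := default
  have : IsMulCommutative P :=
    IsPGroup.isMulCommutative_of_card_eq_prime_sq (P.card_eq_pow_of_card_eq hG (by norm_num))
  have hZn : ∀ z ∈ Z, z ^ 3 = 1 := fun z hz => by
    simpa [hZ] using congrArg Subtype.val (pow_card_eq_one' (x := (⟨z, hz⟩ : Z)))
  have hdisj : Disjoint Z (commutator G') :=
    P.disjoint_commutator_of_le_center hc (IsPGroup.of_card (n := 1) (by rw [hZ, pow_one]))
  have hsq : ∀ q : G' ⧸ Z, q ^ 2 ∈ commutator (G' ⧸ Z) :=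
    pow_mem_commutator_of_surjective (f := e.symm.toMonoidHom) e.symm.surjective
      Equiv.Perm.sq_mem_commutator
  have hK : Function.Bijective ((QuotientGroup.mk' Z).comp (powKerAbelianization G' 2).subtype) :=
    ⟨injective_mk_comp_powKerAbelianization (by norm_num) hZn hdisj,
      surjective_mk_comp_powKerAbelianization (by norm_num) hZn hsq⟩
  exact ⟨_, hK, ⟨(MulEquiv.ofBijective _ hK).trans e⟩⟩
end
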